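/- arXiv:2310.05767 — 2 statements merged into one kernel-verified Lean document; each statement's English description precedes it below -/
import Mathlib

section
/- Let G=(V,E) be a finite simple graph with at least one edge, and let a partition of V be given in which some vertex v with deg(v) ≥ 1 forms a singleton cluster. For each cluster C_i containing at least one neighbor of v, let k_i be the number of neighbors of v in C_i. Adding v to cluster C_i changes the modularity by Δ_i = k_i/|E| − 2·deg(v)·(Σ_{w∈C_i} deg(w))/(4|E|²). Then Σ_i Δ_i > 0, so at least one Δ_i is strictly positive; i.e., the singleton cluster can be merged into a neighboring cluster so as to strictly increase modularity. -/
/-!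
The clusters `C_i` meeting the neighbourhood of `v` partition it, so `∑ k_i = deg v`. As `{v}` is
a cluster of its own, they are disjoint and avoid `v`, so their degree sums add up to at most
`2|E| - deg v`. Hence `∑ Δ_i ≥ deg v / |E| - deg v (2|E| - deg v) / (2|E|²) = deg v² / (2|E|²)`.
-/

open Finset

namespace SimpleGraph

variable {V : Type*} [Fintype V] (G : SimpleGraph V) [DecidableRel G.Adj]

theorem sum_degree_add_degree_le_of_notMem {s : Finset V} {v : V} (hv : v ∉ s) :
    ∑ w ∈ s, G.degree w + G.degree v ≤ 2 * #G.edgeFinset := by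
  calc ∑ w ∈ s, G.degree w + G.degree v = ∑ w ∈ cons v s hv, G.degree w := by
        rw [sum_cons, add_comm]
    _ ≤ ∑ w, G.degree w := sum_le_univ_sum_of_nonneg fun _ ↦ Nat.zero_le _
    _ = 2 * #G.edgeFinset := G.sum_degrees_eq_twice_card_edges

theorem notMem_image_neighborFinset {ι : Type*} [DecidableEq ι] {c : V → ι} {v : V}
    (hsingle : ∀ w, c w = c v → w = v) : c v ∉ (G.neighborFinset v).image c := by
  simp only [mem_image, mem_neighborFinset, not_exists, not_and]
  intro w hvw hcw
  exact G.ne_of_adj hvw (hsingle w hcw).symm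

end SimpleGraph

theorem merge_gain_pos {d S m : ℝ} (hd : 0 < d) (hS : 0 ≤ S) (hSd : S + d ≤ 2 * m) :
    0 < d / m - 2 * d * S / (4 * m ^ 2) := by
  have hm : 0 < m := by linarith
  have hgain : d / m - 2 * d * S / (4 * m ^ 2) = d * (2 * m - S) / (2 * m ^ 2) := by
    field_simp
    ring
  rw [hgain]
  exact div_pos (mul_pos hd (by linarith)) (by positivity)

theorem singleton_cluster_merge_increases_modularity_general
    {V : Type*} [Fintype V]
    (G : SimpleGraph V) [DecidableRel G.Adj]
    {ι : Type*} [Fintype ι] [DecidableEq ι]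
    (c : V → ι) (v : V)
    (hdeg : 1 ≤ G.degree v)
    (hsingle : ∀ w : V, c w = c v → w = v)
    (Δ : ι → ℝ)
    (hΔ : ∀ i : ι, Δ i =
      (((G.neighborFinset v).filter (fun w => c w = i)).card : ℝ) / (G.edgeFinset.card : ℝ)
        - 2 * (G.degree v : ℝ) *
            (∑ w ∈ univ.filter (fun w => c w = i), (G.degree w : ℝ)) /
          (4 * (G.edgeFinset.card : ℝ) ^ 2)) :
    0 < ∑ i ∈ univ.filter (fun i => ∃ w ∈ G.neighborFinset v, c w = i), Δ i ∧
      ∃ i ∈ univ.filter (fun i => ∃ w ∈ G.neighborFinset v, c w = i), 0 < Δ i := by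
  set A := univ.filter (fun i => ∃ w ∈ G.neighborFinset v, c w = i)
  have hA : A = (G.neighborFinset v).image c := by ext; simp [A]
  have hk : ∑ i ∈ A, (#((G.neighborFinset v).filter (fun w => c w = i)) : ℝ) = G.degree v := by
    rw [hA, ← G.card_neighborFinset_eq_degree]
    exact_mod_cast (card_eq_sum_card_image c (G.neighborFinset v)).symm
  have hvol : ∑ w ∈ univ.filter (fun w => c w ∈ A), (G.degree w : ℝ) + G.degree v
      ≤ 2 * #G.edgeFinset := by
    exact_mod_cast G.sum_degree_add_degree_le_of_notMem
      (by simpa [hA] using G.notMem_image_neighborFinset hsingle)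
  have hpos : 0 < ∑ i ∈ A, Δ i := by
    simp only [hΔ, sum_sub_distrib, ← sum_div, ← mul_sum, hk,
      sum_fiberwise_eq_sum_filter univ A c]
    refine merge_gain_pos ?_ ?_ hvol
    · exact_mod_cast hdeg
    · exact sum_nonneg fun _ _ ↦ Nat.cast_nonneg _
  obtain ⟨i, hi, hΔi⟩ :=
    exists_lt_of_sum_lt (f := fun _ ↦ (0 : ℝ)) (g := Δ) (by rwa [sum_const_zero])
  exact ⟨hpos, i, hi, hΔi⟩

theorem singleton_cluster_merge_increases_modularity
    {V : Type*} [Fintype V] [DecidableEq V]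
    (G : SimpleGraph V) [DecidableRel G.Adj]
    {ι : Type*} [Fintype ι] [DecidableEq ι]
    (c : V → ι) (v : V)
    (hdeg : 1 ≤ G.degree v)
    (hE : G.edgeFinset.Nonempty)
    (hsingle : ∀ w : V, c w = c v → w = v)
    (Δ : ι → ℝ)
    (hΔ : ∀ i : ι, Δ i =
      (((G.neighborFinset v).filter (fun w => c w = i)).card : ℝ) / (G.edgeFinset.card : ℝ)
        - 2 * (G.degree v : ℝ) *
            (∑ w ∈ univ.filter (fun w => c w = i), (G.degree w : ℝ)) /
          (4 * (G.edgeFinset.card : ℝ) ^ 2)) :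
    0 < ∑ i ∈ univ.filter (fun i => ∃ w ∈ G.neighborFinset v, c w = i), Δ i ∧
      ∃ i ∈ univ.filter (fun i => ∃ w ∈ G.neighborFinset v, c w = i), 0 < Δ i :=
  singleton_cluster_merge_increases_modularity_general G c v hdeg hsingle Δ hΔ
end

section
/- Let a_0 < b_0 < 1 + a_0 be reals and define a(t) = (a_0 + b_0 − 1/(e^{2t+c}+1))/2 and b(t) = (a_0 + b_0 + 1/(e^{2t+c}+1))/2, where c = ln(1/(b_0 − a_0) − 1). Then a and b solve the system a'(t) = (b(t)−a(t))(1+a(t)−b(t)) and b'(t) = −a'(t) with initial conditions a(0)=a_0, b(0)=b_0. -/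
/-! The gap `g = b - a` is `t ↦ 1 / (exp (2t + c) + 1)`, a logistic curve, so it satisfies
`g' = -2 g (1 - g)`; the midpoint `(a + b) / 2` is constant, and `a' = -g' / 2 = g (1 - g)`.
The constant `c` is chosen precisely so that `g 0 = b₀ - a₀`. -/

open Real

theorem hasDerivAt_one_div_exp_mul_add_add_one (k c t : ℝ) :
    HasDerivAt (fun t => 1 / (exp (k * t + c) + 1))
      (-k * (1 / (exp (k * t + c) + 1) * (1 - 1 / (exp (k * t + c) + 1)))) t := by
  have hlin : HasDerivAt (fun t : ℝ => k * t + c) k t := by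
    simpa using ((hasDerivAt_id t).const_mul k).add_const c
  have hpos : exp (k * t + c) + 1 ≠ 0 := by positivity
  simp only [one_div]
  refine ((hlin.exp.add_const 1).inv hpos).congr_deriv ?_
  field_simp
  ring

theorem one_div_exp_log_one_div_sub_one_add_one {d : ℝ} (hd₀ : 0 < d) (hd₁ : d < 1) :
    1 / (exp (log (1 / d - 1)) + 1) = d := by
  have hpos : 0 < 1 / d - 1 := by
    rw [sub_pos, lt_div_iff₀ hd₀]
    linarith
  rw [exp_log hpos]
  field_simp
  ring

theorem explicit_solution_of_bounded_confidence_example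
    (a0 b0 : ℝ) (h1 : a0 < b0) (h2 : b0 < 1 + a0)
    (c : ℝ) (hc : c = Real.log (1 / (b0 - a0) - 1))
    (a b : ℝ → ℝ)
    (ha : ∀ t, a t = (a0 + b0 - 1 / (Real.exp (2 * t + c) + 1)) / 2)
    (hb : ∀ t, b t = (a0 + b0 + 1 / (Real.exp (2 * t + c) + 1)) / 2) :
    a 0 = a0 ∧ b 0 = b0 ∧
      (∀ t, HasDerivAt a ((b t - a t) * (1 + a t - b t)) t) ∧
      (∀ t, HasDerivAt b (-((b t - a t) * (1 + a t - b t))) t) := by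
  have hgap₀ : 1 / (exp (2 * 0 + c) + 1) = b0 - a0 := by
    rw [mul_zero, zero_add, hc]
    exact one_div_exp_log_one_div_sub_one_add_one (by linarith) (by linarith)
  have hgap := hasDerivAt_one_div_exp_mul_add_add_one 2 c
  refine ⟨by rw [ha, hgap₀]; ring, by rw [hb, hgap₀]; ring, fun t => ?_, fun t => ?_⟩
  · rw [funext ha, hb]
    refine (((hasDerivAt_const t (a0 + b0)).sub (hgap t)).div_const 2).congr_deriv ?_
    ring
  · rw [funext hb, ha]
    refine (((hasDerivAt_const t (a0 + b0)).add (hgap t)).div_const 2).congr_deriv ?_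
    ring
end
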